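/- arXiv:2007.03937 — 2 statements merged into one kernel-verified Lean document; each statement's English description precedes it below -/
import Mathlib

section
/- For every r > 0 and every m ∈ ℕ the following three inequalities hold: (1) 𝔼[𝟙_{B_r}(X^x_m)·|η(X^x_m) − η(x)|] ≤ m · 𝔼[𝟙_{B_r}(X)·|η(X) − η(x)|]; (2) 𝔼[𝟙_{S_r}(X^x_m)·|η(X^x_m) − η(x)|] ≤ 2‖η‖_∞ · m · ℙ_X(S_r) · exp(−(m−1)·ℙ_X(B_r)); (3) 𝔼[𝟙_{B̄_r^c}(X^x_m)·|η(X^x_m) − η(x)|] ≤ 2‖η‖_∞ · exp(−m·ℙ_X(B̄_r)). -/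
open MeasureTheory

/-! The nearest neighbour is one of `X₀, …, X_{m-1}`, so on `B_r` its contribution is dominated
by the sum of the `m` contributions of the samples, each of which has the law of `X`. On `S_r` and
off `B̄_r` the integrand is at most `2‖η‖_∞`, and the events are rare by independence: the nearest
neighbour lies on `S_r` only if some `Xᵢ` does while all other samples avoid `B_r`, and it lies off
`B̄_r` only if every sample does; then `(1 - p)ᵏ ≤ exp (-k p)`. -/

lemma one_sub_pow_le_exp_neg_mul {q : ℝ} (hq : q ≤ 1) (n : ℕ) :
    (1 - q) ^ n ≤ Real.exp (-(n * q)) := by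
  calc (1 - q) ^ n ≤ Real.exp (-q) ^ n :=
        pow_le_pow_left₀ (by linarith) (Real.one_sub_le_exp_neg q) n
    _ = Real.exp (-(n * q)) := by rw [← Real.exp_nat_mul]; ring_nf

lemma abs_sub_le_two_mul_iSup_abs {α : Type*} {f : α → ℝ}
    (hf : BddAbove (Set.range fun y => |f y|)) (y z : α) : |f y - f z| ≤ 2 * ⨆ y, |f y| :=
  calc |f y - f z| ≤ |f y| + |f z| := abs_sub _ _
    _ ≤ (⨆ y, |f y|) + ⨆ y, |f y| := add_le_add (le_ciSup hf y) (le_ciSup hf z)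
    _ = 2 * ⨆ y, |f y| := (two_mul _).symm

section Integral

variable {Ω α : Type*} {mΩ : MeasurableSpace Ω} {P : Measure Ω}

lemma integral_indicator_comp_le_mul_measureReal [IsFiniteMeasure P] {f : Ω → α}
    {g : α → ℝ} {S : Set α} {E : Set Ω} {K : ℝ} (hE : MeasurableSet E)
    (hg : ∀ y ∈ S, 0 ≤ g y ∧ g y ≤ K) (hK : 0 ≤ K) (hSE : f ⁻¹' S ⊆ E) :
    ∫ ω, S.indicator g (f ω) ∂P ≤ K * P.real E := by
  have hpointwise : ∀ ω, S.indicator g (f ω) ≤ E.indicator (fun _ => K) ω := by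
    intro ω
    by_cases hω : f ω ∈ S
    · rw [Set.indicator_of_mem hω, Set.indicator_of_mem (hSE hω)]
      exact (hg _ hω).2
    · rw [Set.indicator_of_notMem hω]; exact Set.indicator_nonneg (fun _ _ => hK) _
  calc ∫ ω, S.indicator g (f ω) ∂P ≤ ∫ ω, E.indicator (fun _ => K) ω ∂P :=
        integral_mono_of_nonneg
          (ae_of_all _ fun ω => Set.indicator_nonneg (fun y hy => (hg y hy).1) _)
          ((integrable_const K).indicator hE) (ae_of_all _ hpointwise)
    _ = K * P.real E := by rw [integral_indicator_const _ hE, smul_eq_mul, mul_comm]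

lemma integral_comp_le_sum_of_forall_exists_eq {f : Ω → α} {X : ℕ → Ω → α} {h : α → ℝ}
    {m : ℕ} (hh : ∀ y, 0 ≤ h y) (hint : ∀ i < m, Integrable (fun ω => h (X i ω)) P)
    (hf : ∀ ω, ∃ i < m, f ω = X i ω) :
    ∫ ω, h (f ω) ∂P ≤ ∑ i ∈ Finset.range m, ∫ ω, h (X i ω) ∂P := by
  have hint' : ∀ i ∈ Finset.range m, Integrable (fun ω => h (X i ω)) P :=
    fun i hi => hint i (Finset.mem_range.mp hi)
  rw [← integral_finsetSum _ hint']
  refine integral_mono_of_nonneg (ae_of_all _ fun ω => hh _) (integrable_finsetSum _ hint')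
    (ae_of_all _ fun ω => ?_)
  obtain ⟨i, hi, hfi⟩ := hf ω
  simp only [hfi]
  exact Finset.single_le_sum (f := fun j => h (X j ω)) (fun j _ => hh _)
    (Finset.mem_range.mpr hi)

lemma integral_comp_le_mul_integral_of_forall_exists_eq [MeasurableSpace α] {μ : Measure α}
    {f : Ω → α} {X : ℕ → Ω → α} {h : α → ℝ} {m : ℕ} (hXmeas : ∀ i, Measurable (X i))
    (hXdist : ∀ i, P.map (X i) = μ) (hh : ∀ y, 0 ≤ h y) (hint : Integrable h μ)
    (hf : ∀ ω, ∃ i < m, f ω = X i ω) :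
    ∫ ω, h (f ω) ∂P ≤ m * ∫ y, h y ∂μ := by
  have hintX : ∀ i, Integrable (fun ω => h (X i ω)) P := fun i =>
    ((hXdist i).symm ▸ hint).comp_measurable (hXmeas i)
  have hintegral : ∀ i, ∫ ω, h (X i ω) ∂P = ∫ y, h y ∂μ := fun i => by
    rw [← hXdist i, integral_map (hXmeas i).aemeasurable ((hXdist i).symm ▸ hint).1]
  calc ∫ ω, h (f ω) ∂P ≤ ∑ i ∈ Finset.range m, ∫ ω, h (X i ω) ∂P :=
        integral_comp_le_sum_of_forall_exists_eq hh (fun i _ => hintX i) hf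
    _ = m * ∫ y, h y ∂μ := by
        simp only [hintegral, Finset.sum_const, Finset.card_range, nsmul_eq_mul]

end Integral

section IndepIdent

variable {Ω α : Type*} {mΩ : MeasurableSpace Ω} [MeasurableSpace α] {P : Measure Ω}
  {μ : Measure α}

lemma measureReal_biInter_preimage_eq_prod {ι : Type*} {X : ι → Ω → α}
    (hXindep : ProbabilityTheory.iIndepFun X P) (hXmeas : ∀ i, Measurable (X i))
    (hXdist : ∀ i, P.map (X i) = μ) (s : Finset ι) {A : ι → Set α}
    (hA : ∀ i ∈ s, MeasurableSet (A i)) :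
    P.real (⋂ i ∈ s, X i ⁻¹' A i) = ∏ i ∈ s, μ.real (A i) := by
  rw [measureReal_def, hXindep.meas_biInter fun i hi => ⟨A i, hA i hi, rfl⟩,
    ENNReal.toReal_prod]
  refine Finset.prod_congr rfl fun i hi => ?_
  rw [← hXdist i, measureReal_def, Measure.map_apply (hXmeas i) (hA i hi)]

lemma measurableSet_update_compl {S A : Set α} (hS : MeasurableSet S) (hA : MeasurableSet A)
    (i j : ℕ) : MeasurableSet (Function.update (fun _ => Aᶜ) i S j) := by
  rw [Function.update_apply]
  split_ifs
  exacts [hS, hA.compl]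

variable [IsProbabilityMeasure μ] {X : ℕ → Ω → α}

lemma measureReal_biInter_preimage_compl_le_exp
    (hXindep : ProbabilityTheory.iIndepFun X P) (hXmeas : ∀ i, Measurable (X i))
    (hXdist : ∀ i, P.map (X i) = μ) {A : Set α} (hA : MeasurableSet A) (m : ℕ) :
    P.real (⋂ j ∈ Finset.range m, X j ⁻¹' Aᶜ) ≤ Real.exp (-(m * μ.real A)) := by
  rw [measureReal_biInter_preimage_eq_prod hXindep hXmeas hXdist _ fun _ _ => hA.compl,
    Finset.prod_const, Finset.card_range, probReal_compl_eq_one_sub hA]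
  exact one_sub_pow_le_exp_neg_mul measureReal_le_one m

lemma measureReal_biUnion_biInter_preimage_update_le
    (hXindep : ProbabilityTheory.iIndepFun X P) (hXmeas : ∀ i, Measurable (X i))
    (hXdist : ∀ i, P.map (X i) = μ) {S A : Set α} (hS : MeasurableSet S) (hA : MeasurableSet A)
    {m : ℕ} (hm : 1 ≤ m) :
    P.real (⋃ i ∈ Finset.range m, ⋂ j ∈ Finset.range m,
        X j ⁻¹' Function.update (fun _ => Aᶜ) i S j) ≤
      m * μ.real S * Real.exp (-((m : ℝ) - 1) * μ.real A) := by
  have hevent : ∀ i ∈ Finset.range m, P.real (⋂ j ∈ Finset.range m,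
      X j ⁻¹' Function.update (fun _ => Aᶜ) i S j) = μ.real S * (1 - μ.real A) ^ (m - 1) := by
    intro i hi
    rw [measureReal_biInter_preimage_eq_prod hXindep hXmeas hXdist _ fun j _ => ?_]
    · rw [Finset.prod_congr rfl fun j _ => Function.apply_update (fun _ => μ.real) _ i S j,
        Finset.prod_update_of_mem hi, Finset.prod_const, Finset.card_sdiff_of_subset
        (Finset.singleton_subset_iff.mpr hi), Finset.card_range, Finset.card_singleton,
        probReal_compl_eq_one_sub hA]
    · exact measurableSet_update_compl hS hA i j
  have hexp : (1 - μ.real A) ^ (m - 1) ≤ Real.exp (-((m : ℝ) - 1) * μ.real A) := by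
    convert one_sub_pow_le_exp_neg_mul (measureReal_le_one (μ := μ) (s := A)) (m - 1) using 2
    push_cast [Nat.cast_sub hm]
    ring
  calc _ ≤ ∑ i ∈ Finset.range m, P.real (⋂ j ∈ Finset.range m,
        X j ⁻¹' Function.update (fun _ => Aᶜ) i S j) := measureReal_biUnion_finset_le _ _
    _ = m * (μ.real S * (1 - μ.real A) ^ (m - 1)) := by
        rw [Finset.sum_congr rfl hevent, Finset.sum_const, Finset.card_range, nsmul_eq_mul]
    _ ≤ m * (μ.real S * Real.exp (-((m : ℝ) - 1) * μ.real A)) := by gcongr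
    _ = m * μ.real S * Real.exp (-((m : ℝ) - 1) * μ.real A) := (mul_assoc _ _ _).symm

end IndepIdent

def IsNearestNeighbor {𝒳 Ω : Type*} [PseudoMetricSpace 𝒳] (x : 𝒳) (X : ℕ → Ω → 𝒳) (m : ℕ)
    (Y : Ω → 𝒳) : Prop :=
  ∀ ω, (∃ i < m, Y ω = X i ω) ∧ ∀ j < m, dist x (Y ω) ≤ dist x (X j ω)

namespace IsNearestNeighbor

variable {𝒳 Ω : Type*} [PseudoMetricSpace 𝒳] {x : 𝒳} {X : ℕ → Ω → 𝒳} {m : ℕ} {Y : Ω → 𝒳}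

lemma preimage_compl_closedBall_subset (hY : IsNearestNeighbor x X m Y) (r : ℝ) :
    Y ⁻¹' (Metric.closedBall x r)ᶜ ⊆
      ⋂ j ∈ Finset.range m, X j ⁻¹' (Metric.closedBall x r)ᶜ := by
  intro ω hω
  simp only [Set.mem_preimage, Set.mem_compl_iff, Metric.mem_closedBall, not_le, dist_comm] at hω
  simp only [Set.mem_iInter, Finset.mem_range, Set.mem_preimage, Set.mem_compl_iff,
    Metric.mem_closedBall, not_le, dist_comm]
  exact fun j hj => hω.trans_le ((hY ω).2 j hj)

lemma preimage_sphere_subset (hY : IsNearestNeighbor x X m Y) (r : ℝ) :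
    Y ⁻¹' Metric.sphere x r ⊆ ⋃ i ∈ Finset.range m, ⋂ j ∈ Finset.range m,
      X j ⁻¹' Function.update (fun _ => (Metric.ball x r)ᶜ) i (Metric.sphere x r) j := by
  intro ω hω
  obtain ⟨⟨i, hi, hYi⟩, hdist⟩ := hY ω
  simp only [Set.mem_iUnion, Set.mem_iInter, Finset.mem_range, Set.mem_preimage]
  refine ⟨i, hi, fun j hj => ?_⟩
  rcases eq_or_ne j i with rfl | hji
  · simpa [← hYi] using hω
  · rw [Function.update_of_ne hji, Set.mem_compl_iff, Metric.mem_ball, not_lt, dist_comm]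
    rw [Set.mem_preimage, Metric.mem_sphere, dist_comm] at hω
    exact hω ▸ hdist j hj

end IsNearestNeighbor

theorem stmt_2_general
    {𝒳 Ω : Type*} [MetricSpace 𝒳] [MeasurableSpace 𝒳] [BorelSpace 𝒳]
    {mΩ : MeasurableSpace Ω} (P : Measure Ω) [IsProbabilityMeasure P]
    (X : ℕ → Ω → 𝒳) (μ : Measure 𝒳)
    (hXmeas : ∀ i, Measurable (X i))
    (hXindep : ProbabilityTheory.iIndepFun (m := fun _ => (inferInstance : MeasurableSpace 𝒳)) X P)
    (hXdist : ∀ i, P.map (X i) = μ)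
    (x : 𝒳)
    (η : 𝒳 → ℝ) (hηmeas : Measurable η) (C : ℝ) (hηbdd : ∀ y, |η y| ≤ C)
    (NN : ℕ → Ω → 𝒳)
    (hNN : ∀ m, 1 ≤ m → ∀ ω, (∃ i < m, NN m ω = X i ω) ∧
      ∀ j < m, dist x (NN m ω) ≤ dist x (X j ω))
    (r : ℝ) (m : ℕ) (hm : 1 ≤ m) :
    ((∫ ω, Set.indicator (Metric.ball x r) (fun y => |η y - η x|) (NN m ω) ∂P)
        ≤ m * ∫ y in Metric.ball x r, |η y - η x| ∂μ) ∧
    ((∫ ω, Set.indicator (Metric.sphere x r) (fun y => |η y - η x|) (NN m ω) ∂P)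
        ≤ 2 * (⨆ y, |η y|) * m * (μ (Metric.sphere x r)).toReal *
          Real.exp (-((m : ℝ) - 1) * (μ (Metric.ball x r)).toReal)) ∧
    ((∫ ω, Set.indicator (Metric.closedBall x r)ᶜ (fun y => |η y - η x|) (NN m ω) ∂P)
        ≤ 2 * (⨆ y, |η y|) *
          Real.exp (-(m : ℝ) * (μ (Metric.closedBall x r)).toReal)) := by
  have hμ : IsProbabilityMeasure μ :=
    hXdist 0 ▸ Measure.isProbabilityMeasure_map (hXmeas 0).aemeasurable
  have hY : IsNearestNeighbor x X m (NN m) := hNN m hm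
  set K := 2 * ⨆ y, |η y|
  have hbound : ∀ y, 0 ≤ |η y - η x| ∧ |η y - η x| ≤ K := fun y =>
    ⟨abs_nonneg _, abs_sub_le_two_mul_iSup_abs ⟨C, Set.forall_mem_range.mpr hηbdd⟩ y x⟩
  have hK : 0 ≤ K := (hbound x).1.trans (hbound x).2
  refine ⟨?_, ?_, ?_⟩
  · rw [← integral_indicator measurableSet_ball]
    refine integral_comp_le_mul_integral_of_forall_exists_eq hXmeas hXdist
      (fun y => Set.indicator_nonneg (fun y _ => (hbound y).1) y) ?_ fun ω => (hY ω).1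
    refine (Integrable.of_bound (hηmeas.sub_const _).abs.aestronglyMeasurable K
      (ae_of_all _ fun y => ?_)).indicator measurableSet_ball
    simpa [Real.norm_eq_abs] using (hbound y).2
  · calc _ ≤ K * P.real _ := integral_indicator_comp_le_mul_measureReal
          ((Finset.measurableSet_biUnion _ fun i _ => Finset.measurableSet_biInter _ fun j _ =>
            hXmeas j (measurableSet_update_compl Metric.isClosed_sphere.measurableSet
              measurableSet_ball i j))) (fun y _ => hbound y) hK (hY.preimage_sphere_subset r)
      _ ≤ K * (m * μ.real (Metric.sphere x r) *
            Real.exp (-((m : ℝ) - 1) * μ.real (Metric.ball x r))) :=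
          mul_le_mul_of_nonneg_left (measureReal_biUnion_biInter_preimage_update_le hXindep
            hXmeas hXdist Metric.isClosed_sphere.measurableSet measurableSet_ball hm) hK
      _ = _ := by simp only [measureReal_def]; ring
  · calc _ ≤ K * P.real _ := integral_indicator_comp_le_mul_measureReal
          (Finset.measurableSet_biInter _ fun j _ => hXmeas j measurableSet_closedBall.compl)
          (fun y _ => hbound y) hK (hY.preimage_compl_closedBall_subset r)
      _ ≤ K * Real.exp (-(m * μ.real (Metric.closedBall x r))) :=
          mul_le_mul_of_nonneg_left (measureReal_biInter_preimage_compl_le_exp hXindep hXmeas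
            hXdist measurableSet_closedBall m) hK
      _ = _ := by rw [measureReal_def, neg_mul]

/-- **Lemma (geometric estimates).**
In the nearest-neighbor setting, for every `r > 0` and every `m ≥ 1`:
(1) `𝔼[𝟙_{B_r}(NN m)·|η(NN m) − η(x)|] ≤ m · 𝔼[𝟙_{B_r}(X)·|η(X) − η(x)|]`;
(2) `𝔼[𝟙_{S_r}(NN m)·|η(NN m) − η(x)|]
      ≤ 2‖η‖_∞ · m · μ(S_r) · exp(−(m−1)·μ(B_r))`;
(3) `𝔼[𝟙_{B̄_rᶜ}(NN m)·|η(NN m) − η(x)|] ≤ 2‖η‖_∞ · exp(−m·μ(B̄_r))`,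
where `μ` is the common distribution of the samples and `‖η‖_∞ = ⨆ y, |η y|`. -/
theorem stmt_2
    {𝒳 Ω : Type*} [MetricSpace 𝒳] [MeasurableSpace 𝒳] [BorelSpace 𝒳]
    {mΩ : MeasurableSpace Ω} (P : Measure Ω) [IsProbabilityMeasure P]
    (X : ℕ → Ω → 𝒳) (μ : Measure 𝒳)
    (hXmeas : ∀ i, Measurable (X i))
    (hXindep : ProbabilityTheory.iIndepFun (m := fun _ => (inferInstance : MeasurableSpace 𝒳)) X P)
    (hXdist : ∀ i, P.map (X i) = μ)
    (x : 𝒳) (hsupp : ∀ r > (0 : ℝ), 0 < μ (Metric.closedBall x r))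
    (η : 𝒳 → ℝ) (hηmeas : Measurable η) (C : ℝ) (hηbdd : ∀ y, |η y| ≤ C)
    (NN : ℕ → Ω → 𝒳)
    (hNNmeas : ∀ m, 1 ≤ m → Measurable (NN m))
    (hNN : ∀ m, 1 ≤ m → ∀ ω, (∃ i < m, NN m ω = X i ω) ∧
      ∀ j < m, dist x (NN m ω) ≤ dist x (X j ω))
    (r : ℝ) (hr : 0 < r) (m : ℕ) (hm : 1 ≤ m) :
    ((∫ ω, Set.indicator (Metric.ball x r) (fun y => |η y - η x|) (NN m ω) ∂P)
        ≤ m * ∫ y in Metric.ball x r, |η y - η x| ∂μ) ∧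
    ((∫ ω, Set.indicator (Metric.sphere x r) (fun y => |η y - η x|) (NN m ω) ∂P)
        ≤ 2 * (⨆ y, |η y|) * m * (μ (Metric.sphere x r)).toReal *
          Real.exp (-((m : ℝ) - 1) * (μ (Metric.ball x r)).toReal)) ∧
    ((∫ ω, Set.indicator (Metric.closedBall x r)ᶜ (fun y => |η y - η x|) (NN m ω) ∂P)
        ≤ 2 * (⨆ y, |η y|) *
          Real.exp (-(m : ℝ) * (μ (Metric.closedBall x r)).toReal)) :=
  stmt_2_general (mΩ := mΩ) P X μ hXmeas hXindep hXdist x η hηmeas C hηbdd NN hNN r m hm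
end

section
/- Suppose ∫_{B̄_R(x)} |η| dμ < ∞. Then the following are equivalent: (1) x is a Lebesgue point for η with respect to μ along an α-sequence, for some α ∈ (0,1); (2) x is a Lebesgue point for η with respect to μ, i.e. (1/μ(B̄_r(x))) ∫_{B̄_r(x)} |η(x') − η(x)| dμ(x') → 0 as r → 0⁺. -/
open MeasureTheory Filter Topology ENNReal

/-- `M_α(r) = (∫_{B̄_r(x)} |η − η(x)| dμ)^α · (μ(B̄_r(x)))^{1−α}`, computed in `ℝ≥0∞`. -/
noncomputable def alphaRatioFn {𝒳 : Type*} [MetricSpace 𝒳] [MeasurableSpace 𝒳]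
    (μ : MeasureTheory.Measure 𝒳) (η : 𝒳 → ℝ) (x : 𝒳) (α : ℝ) (r : ℝ) : ℝ≥0∞ :=
  (∫⁻ y in Metric.closedBall x r, ENNReal.ofReal |η y - η x| ∂μ) ^ α *
    (μ (Metric.closedBall x r)) ^ (1 - α)

/-- The `α`-sequence `r_m := sup {r > 0 | M_α(r) < 1/m}` for `η` w.r.t. `μ` at `x`. -/
noncomputable def alphaSeq {𝒳 : Type*} [MetricSpace 𝒳] [MeasurableSpace 𝒳]
    (μ : MeasureTheory.Measure 𝒳) (η : 𝒳 → ℝ) (x : 𝒳) (α : ℝ) (m : ℕ) : ℝ :=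
  sSup {r : ℝ | 0 < r ∧ alphaRatioFn μ η x α r < ((m : ℝ≥0∞))⁻¹}

open Metric Set

/-!
Write `M(r) = L(r)^α V(r)^(1-α)` with `L(r) = ∫_{B̄_r(x)} |η - η x| dμ` and `V(r) = μ(B̄_r(x))`,
so that `(L/V)^α = M/V`. Since `M` is monotone and right-continuous, for `r_{m+1} < r < r_m`
we get `M(r) < 1/m ≤ 2/(m+1) ≤ 2 M(r_{m+1})`, and as `V(r_{m+1}) ≤ V(r)` the Lebesgue ratio
at `r` is at most `2^{1/α}` times the ratio at `r_{m+1}`. The radii `r_m` tend to `0⁺`, so every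
small `r` lies in some `(r_{m+1}, r_m]`, and convergence along the α-sequence gives convergence
as `r → 0⁺`; the converse is composition with `r_m → 0⁺`.
-/

theorem div_le_rpow_inv_mul_div_of_rpow_mul_rpow_le {α c l₁ v₁ l₂ v₂ : ℝ} (hα : 0 < α)
    (hc : 0 ≤ c) (hl₁ : 0 ≤ l₁) (hl₂ : 0 ≤ l₂) (hv₂ : 0 < v₂) (hv : v₂ ≤ v₁)
    (h : l₁ ^ α * v₁ ^ (1 - α) ≤ c * (l₂ ^ α * v₂ ^ (1 - α))) :
    l₁ / v₁ ≤ c ^ α⁻¹ * (l₂ / v₂) := by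
  have hv₁ : 0 < v₁ := hv₂.trans_le hv
  have hratio : ∀ {l v : ℝ}, 0 ≤ l → 0 < v → (l / v) ^ α = l ^ α * v ^ (1 - α) / v := by
    intro l v hl hv
    rw [Real.div_rpow hl hv.le, mul_div_assoc, Real.rpow_sub hv, Real.rpow_one]
    field_simp
  have hpow : (l₁ / v₁) ^ α ≤ (c ^ α⁻¹ * (l₂ / v₂)) ^ α := by
    rw [Real.mul_rpow (by positivity) (by positivity), ← Real.rpow_mul hc,
      inv_mul_cancel₀ hα.ne', Real.rpow_one, hratio hl₁ hv₁, hratio hl₂ hv₂]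
    calc l₁ ^ α * v₁ ^ (1 - α) / v₁ ≤ c * (l₂ ^ α * v₂ ^ (1 - α)) / v₁ := by gcongr
      _ ≤ c * (l₂ ^ α * v₂ ^ (1 - α)) / v₂ := by gcongr
      _ = c * (l₂ ^ α * v₂ ^ (1 - α) / v₂) := mul_div_assoc _ _ _
  exact (Real.rpow_le_rpow_iff (by positivity) (by positivity) hα).1 hpow

theorem exists_succ_lt_le_of_tendsto_zero {s : ℕ → ℝ} (hs : Tendsto s atTop (𝓝 0)) {r : ℝ}
    (hr : 0 < r) {N : ℕ} (hN : r ≤ s N) : ∃ m ≥ N, s (m + 1) < r ∧ r ≤ s m := by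
  by_contra! h
  have hle : ∀ m ≥ N, r ≤ s m := fun m hm => by
    induction m, hm using Nat.le_induction with
    | base => exact hN
    | succ m hm ih => exact not_lt.1 fun hlt => (h m hm hlt).not_ge ih
  obtain ⟨m, hm⟩ := ((hs.eventually (gt_mem_nhds hr)).and (eventually_ge_atTop N)).exists
  exact hm.1.not_ge (hle m hm.2)

theorem tendsto_nhdsGT_zero_of_tendsto_comp {Q : ℝ → ℝ} {s : ℕ → ℝ} {C : ℝ}
    (hQ : ∀ r > 0, 0 ≤ Q r) (hs : Tendsto s atTop (𝓝[>] 0))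
    (hQs : Tendsto (Q ∘ s) atTop (𝓝 0))
    (hgap : ∀ᶠ m in atTop, ∀ r ∈ Ioo (s (m + 1)) (s m), Q r ≤ C * Q (s (m + 1))) :
    Tendsto Q (𝓝[>] 0) (𝓝 0) := by
  have hbound : Tendsto (fun m => max (Q (s m)) (C * Q (s (m + 1)))) atTop (𝓝 0) := by
    simpa using hQs.max (((tendsto_add_atTop_iff_nat 1).2 hQs).const_mul C)
  refine tendsto_order.2 ⟨fun a ha => ?_, fun b hb => ?_⟩
  · filter_upwards [self_mem_nhdsWithin] with r hr using ha.trans_le (hQ r hr)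
  obtain ⟨N, hN⟩ := eventually_atTop.1
    (hgap.and ((hs.eventually self_mem_nhdsWithin).and (hbound.eventually (gt_mem_nhds hb))))
  filter_upwards [Ioo_mem_nhdsGT (hN N le_rfl).2.1] with r hr
  obtain ⟨m, hmN, hlt, hle⟩ :=
    exists_succ_lt_le_of_tendsto_zero (tendsto_nhds_of_tendsto_nhdsWithin hs) hr.1 hr.2.le
  obtain ⟨hgapm, -, hmb⟩ := hN m hmN
  refine lt_of_le_of_lt ?_ hmb
  rcases hle.eq_or_lt with rfl | hlt'
  · exact le_max_left _ _
  · exact (hgapm r ⟨hlt, hlt'⟩).trans (le_max_right _ _)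

/- `alphaSeq μ η x α` is definitionally `thresholdRadius (alphaRatioFn μ η x α)`. Since
`(0 : ℝ≥0∞)⁻¹ = ⊤` and `sSup` of an unbounded set of reals is `0`, the radius is meaningful
only for large `m`. -/
noncomputable def thresholdRadius (M : ℝ → ℝ≥0∞) (m : ℕ) : ℝ :=
  sSup {r : ℝ | 0 < r ∧ M r < (m : ℝ≥0∞)⁻¹}

namespace thresholdRadius

variable {M : ℝ → ℝ≥0∞} {m : ℕ}

theorem nonempty (hM0 : Tendsto M (𝓝[>] 0) (𝓝 0)) (m : ℕ) :
    {r : ℝ | 0 < r ∧ M r < (m : ℝ≥0∞)⁻¹}.Nonempty :=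
  (eventually_mem_nhdsWithin.and
    (hM0.eventually (gt_mem_nhds (ENNReal.inv_pos.2 (natCast_ne_top m))))).exists

theorem eventually_forall_lt (hM : Monotone M) (hpos : ∀ r > 0, 0 < M r) {ρ : ℝ}
    (hρ : 0 < ρ) : ∀ᶠ m : ℕ in atTop, ∀ r ∈ {r : ℝ | 0 < r ∧ M r < (m : ℝ≥0∞)⁻¹}, r < ρ := by
  filter_upwards [ENNReal.tendsto_inv_nat_nhds_zero.eventually (gt_mem_nhds (hpos ρ hρ))]
    with m hm r hr using hM.reflect_lt (hr.2.trans hm)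

theorem pos (hM0 : Tendsto M (𝓝[>] 0) (𝓝 0))
    (hbdd : BddAbove {r : ℝ | 0 < r ∧ M r < (m : ℝ≥0∞)⁻¹}) : 0 < thresholdRadius M m :=
  let ⟨_, hr⟩ := nonempty hM0 m
  hr.1.trans_le (le_csSup hbdd hr)

theorem tendsto_nhdsGT (hM : Monotone M) (hpos : ∀ r > 0, 0 < M r)
    (hM0 : Tendsto M (𝓝[>] 0) (𝓝 0)) : Tendsto (thresholdRadius M) atTop (𝓝[>] 0) := by
  refine tendsto_nhdsWithin_iff.2 ⟨tendsto_order.2 ⟨fun a ha => ?_, fun b hb => ?_⟩, ?_⟩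
  · filter_upwards [eventually_forall_lt hM hpos one_pos] with m hm
    exact ha.trans (pos hM0 ⟨1, fun r hr => (hm r hr).le⟩)
  · filter_upwards [eventually_forall_lt hM hpos (half_pos hb)] with m hm
    exact (csSup_le (nonempty hM0 m) fun r hr => (hm r hr).le).trans_lt (half_lt_self hb)
  · filter_upwards [eventually_forall_lt hM hpos one_pos] with m hm
    exact pos hM0 ⟨1, fun r hr => (hm r hr).le⟩

theorem lt_inv_of_lt (hM : Monotone M) (hM0 : Tendsto M (𝓝[>] 0) (𝓝 0))
    {r : ℝ} (hr : r < thresholdRadius M m) : M r < (m : ℝ≥0∞)⁻¹ :=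
  let ⟨_, hr', hlt⟩ := exists_lt_of_lt_csSup (nonempty hM0 m) hr
  (hM hlt.le).trans_lt hr'.2

theorem inv_le (hM0 : Tendsto M (𝓝[>] 0) (𝓝 0))
    (hbdd : BddAbove {r : ℝ | 0 < r ∧ M r < (m : ℝ≥0∞)⁻¹})
    (hcont : Tendsto M (𝓝[>] (thresholdRadius M m)) (𝓝 (M (thresholdRadius M m)))) :
    (m : ℝ≥0∞)⁻¹ ≤ M (thresholdRadius M m) := by
  refine ge_of_tendsto hcont (eventually_nhdsWithin_of_forall fun r (hr : _ < r) => ?_)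
  by_contra! hlt
  exact hr.not_ge (le_csSup hbdd ⟨(pos hM0 hbdd).trans hr, hlt⟩)

theorem eventually_le_two_mul (hM : Monotone M) (hpos : ∀ r > 0, 0 < M r)
    (hM0 : Tendsto M (𝓝[>] 0) (𝓝 0)) {R : ℝ} (hR : 0 < R)
    (hcont : ∀ a ∈ Ioo 0 R, Tendsto M (𝓝[>] a) (𝓝 (M a))) :
    ∀ᶠ m in atTop, ∀ r < thresholdRadius M m, M r ≤ 2 * M (thresholdRadius M (m + 1)) := by
  filter_upwards [eventually_forall_lt hM hpos (half_pos hR), eventually_ge_atTop 1]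
    with m hm hm1 r hr
  have hR2 : R / 2 ∈ upperBounds {r : ℝ | 0 < r ∧ M r < ((m + 1 : ℕ) : ℝ≥0∞)⁻¹} :=
    fun r hr' => (hm r ⟨hr'.1, hr'.2.trans_le (ENNReal.inv_le_inv.2 (by simp))⟩).le
  have hmem : thresholdRadius M (m + 1) ∈ Ioo 0 R :=
    ⟨pos hM0 ⟨_, hR2⟩, (csSup_le (nonempty hM0 _) hR2).trans_lt (half_lt_self hR)⟩
  have hinv : (m : ℝ≥0∞)⁻¹ ≤ 2 * ((m + 1 : ℕ) : ℝ≥0∞)⁻¹ := by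
    rw [← div_eq_mul_inv, ENNReal.le_div_iff_mul_le (by simp) (by simp), mul_comm,
      ← div_eq_mul_inv, ENNReal.div_le_iff (by simp; omega) (by simp)]
    norm_cast
    omega
  calc M r ≤ (m : ℝ≥0∞)⁻¹ := (lt_inv_of_lt hM hM0 hr).le
    _ ≤ 2 * ((m + 1 : ℕ) : ℝ≥0∞)⁻¹ := hinv
    _ ≤ 2 * M (thresholdRadius M (m + 1)) := by gcongr; exact inv_le hM0 ⟨_, hR2⟩ (hcont _ hmem)

end thresholdRadius

noncomputable def lebesgueRatio {𝒳 : Type*} [MetricSpace 𝒳] [MeasurableSpace 𝒳]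
    (μ : Measure 𝒳) (η : 𝒳 → ℝ) (x : 𝒳) (r : ℝ) : ℝ :=
  (∫ y in closedBall x r, |η y - η x| ∂μ) / (μ (closedBall x r)).toReal

section alphaRatioFn

variable {𝒳 : Type*} [MetricSpace 𝒳] [MeasurableSpace 𝒳] {μ : Measure 𝒳} {η : 𝒳 → ℝ}
  {x : 𝒳} {α r R : ℝ}

theorem monotone_alphaRatioFn (hα₀ : 0 ≤ α) (hα₁ : α ≤ 1) :
    Monotone (alphaRatioFn μ η x α) := fun _ _ hab =>
  mul_le_mul' (ENNReal.rpow_le_rpow (lintegral_mono_set (closedBall_subset_closedBall hab)) hα₀)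
    (ENNReal.rpow_le_rpow (measure_mono (closedBall_subset_closedBall hab)) (sub_nonneg.2 hα₁))

theorem alphaRatioFn_pos (hα₀ : 0 ≤ α) (hα₁ : α ≤ 1)
    (hL : 0 < ∫⁻ y in closedBall x r, ENNReal.ofReal |η y - η x| ∂μ)
    (hV : 0 < μ (closedBall x r)) : 0 < alphaRatioFn μ η x α r :=
  ENNReal.mul_pos (ENNReal.rpow_pos_of_nonneg hL hα₀).ne'
    (ENNReal.rpow_pos_of_nonneg hV (sub_nonneg.2 hα₁)).ne'

theorem alphaRatioFn_zero (hα : 0 < α) (hx : μ {x} = 0) : alphaRatioFn μ η x α 0 = 0 := by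
  rw [alphaRatioFn, closedBall_zero, setLIntegral_measure_zero _ _ hx,
    ENNReal.zero_rpow_of_pos hα, zero_mul]

theorem lintegral_closedBall_eq_ofReal_integral (hrR : r ≤ R)
    (hint : IntegrableOn η (closedBall x R) μ) (hfin : μ (closedBall x R) ≠ ∞) :
    ∫⁻ y in closedBall x r, ENNReal.ofReal |η y - η x| ∂μ =
      ENNReal.ofReal (∫ y in closedBall x r, |η y - η x| ∂μ) := by
  have hint' : IntegrableOn (fun y => |η y - η x|) (closedBall x R) μ :=
    (hint.sub (integrableOn_const hfin)).abs
  exact (ofReal_integral_eq_lintegral_ofReal (hint'.mono_set (closedBall_subset_closedBall hrR))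
    (ae_of_all _ fun _ => abs_nonneg _)).symm

theorem lintegral_closedBall_ne_top (hint : IntegrableOn η (closedBall x R) μ)
    (hfin : μ (closedBall x R) ≠ ∞) :
    ∫⁻ y in closedBall x R, ENNReal.ofReal |η y - η x| ∂μ ≠ ∞ := by
  rw [lintegral_closedBall_eq_ofReal_integral le_rfl hint hfin]
  exact ofReal_ne_top

theorem lebesgueRatio_nonneg (r : ℝ) : 0 ≤ lebesgueRatio μ η x r :=
  div_nonneg (integral_nonneg fun _ => abs_nonneg _) toReal_nonneg

theorem toReal_alphaRatioFn (hrR : r ≤ R) (hint : IntegrableOn η (closedBall x R) μ)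
    (hfin : μ (closedBall x R) ≠ ∞) :
    (alphaRatioFn μ η x α r).toReal = (∫ y in closedBall x r, |η y - η x| ∂μ) ^ α *
      (μ (closedBall x r)).toReal ^ (1 - α) := by
  rw [alphaRatioFn, lintegral_closedBall_eq_ofReal_integral hrR hint hfin, toReal_mul,
    ← toReal_rpow, ← toReal_rpow, toReal_ofReal (integral_nonneg fun _ => abs_nonneg _)]

theorem lebesgueRatio_le_of_alphaRatioFn_le {s : ℝ} (hα : 0 < α) (hs : 0 < μ (closedBall x s))
    (hsr : s ≤ r) (hrR : r ≤ R) (hint : IntegrableOn η (closedBall x R) μ)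
    (hfin : μ (closedBall x R) ≠ ∞)
    (hle : alphaRatioFn μ η x α r ≤ 2 * alphaRatioFn μ η x α s) :
    lebesgueRatio μ η x r ≤ 2 ^ α⁻¹ * lebesgueRatio μ η x s := by
  have hsR := hsr.trans hrR
  have hVs : μ (closedBall x s) ≠ ∞ :=
    ne_top_of_le_ne_top hfin (measure_mono (closedBall_subset_closedBall hsR))
  have hMs : alphaRatioFn μ η x α s ≠ ∞ := by
    rw [alphaRatioFn, lintegral_closedBall_eq_ofReal_integral hsR hint hfin]
    exact mul_ne_top (rpow_ne_top_of_nonneg hα.le ofReal_ne_top)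
      (rpow_ne_top_of_ne_zero hs.ne' hVs)
  have hVr : μ (closedBall x r) ≠ ∞ :=
    ne_top_of_le_ne_top hfin (measure_mono (closedBall_subset_closedBall hrR))
  have hM := toReal_mono (mul_ne_top ofNat_ne_top hMs) hle
  rw [toReal_mul, toReal_alphaRatioFn hrR hint hfin, toReal_alphaRatioFn hsR hint hfin] at hM
  exact div_le_rpow_inv_mul_div_of_rpow_mul_rpow_le hα zero_le_two
    (integral_nonneg fun _ => abs_nonneg _) (integral_nonneg fun _ => abs_nonneg _)
    (toReal_pos hs.ne' hVs) (toReal_mono hVr (measure_mono (closedBall_subset_closedBall hsr))) hM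

end alphaRatioFn

section rightContinuity

variable {𝒳 : Type*} [MetricSpace 𝒳] [MeasurableSpace 𝒳] [OpensMeasurableSpace 𝒳]
  {μ : Measure 𝒳} {η : 𝒳 → ℝ} {x : 𝒳} {α a R : ℝ}

theorem tendsto_measure_closedBall_nhdsGT (ν : Measure 𝒳) (x : 𝒳) (haR : a < R)
    (hR : ν (closedBall x R) ≠ ∞) :
    Tendsto (fun r => ν (closedBall x r)) (𝓝[>] a) (𝓝 (ν (closedBall x a))) := by
  rw [← biInter_gt_closedBall x a]
  exact tendsto_measure_biInter_gt (fun _ _ => measurableSet_closedBall.nullMeasurableSet)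
    (fun _ _ _ hij => closedBall_subset_closedBall hij) ⟨R, haR, hR⟩

theorem tendsto_alphaRatioFn_nhdsGT (hα₀ : 0 ≤ α) (hα₁ : α ≤ 1) (haR : a < R)
    (hL : ∫⁻ y in closedBall x R, ENNReal.ofReal |η y - η x| ∂μ ≠ ∞)
    (hV : μ (closedBall x R) ≠ ∞) :
    Tendsto (alphaRatioFn μ η x α) (𝓝[>] a) (𝓝 (alphaRatioFn μ η x α a)) := by
  set ν := μ.withDensity fun y => ENNReal.ofReal |η y - η x|
  have hν : ∀ r, ∫⁻ y in closedBall x r, ENNReal.ofReal |η y - η x| ∂μ = ν (closedBall x r) :=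
    fun r => (withDensity_apply _ measurableSet_closedBall).symm
  have hM : alphaRatioFn μ η x α =
      fun r => ν (closedBall x r) ^ α * μ (closedBall x r) ^ (1 - α) :=
    funext fun r => by rw [alphaRatioFn, hν]
  have hfin : ∀ π : Measure 𝒳, π (closedBall x R) ≠ ∞ → π (closedBall x a) ≠ ∞ := fun π hπ =>
    ne_top_of_le_ne_top hπ (measure_mono (closedBall_subset_closedBall haR.le))
  rw [hν] at hL
  rw [hM]
  exact ENNReal.Tendsto.mul
    ((ENNReal.continuous_rpow_const.tendsto _).comp (tendsto_measure_closedBall_nhdsGT ν x haR hL))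
    (Or.inr (rpow_ne_top_of_nonneg (sub_nonneg.2 hα₁) (hfin μ hV)))
    ((ENNReal.continuous_rpow_const.tendsto _).comp (tendsto_measure_closedBall_nhdsGT μ x haR hV))
    (Or.inr (rpow_ne_top_of_nonneg hα₀ (hfin ν hL)))

end rightContinuity

section LebesguePoint

variable {𝒳 : Type*} [MetricSpace 𝒳] [MeasurableSpace 𝒳] [OpensMeasurableSpace 𝒳]
  {μ : Measure 𝒳} {η : 𝒳 → ℝ} {x : 𝒳} {α R : ℝ}

theorem tendsto_alphaRatioFn_nhdsGT_zero (hα₀ : 0 < α) (hα₁ : α ≤ 1) (hR : 0 < R)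
    (hfin : μ (closedBall x R) ≠ ∞) (hint : IntegrableOn η (closedBall x R) μ)
    (hx : μ {x} = 0) : Tendsto (alphaRatioFn μ η x α) (𝓝[>] 0) (𝓝 0) := by
  simpa [alphaRatioFn_zero hα₀ hx] using
    tendsto_alphaRatioFn_nhdsGT hα₀.le hα₁ hR (lintegral_closedBall_ne_top hint hfin) hfin

theorem tendsto_alphaSeq_nhdsGT (hα₀ : 0 < α) (hα₁ : α ≤ 1)
    (hsupp : ∀ r > (0 : ℝ), 0 < μ (closedBall x r)) (hR : 0 < R)
    (hfin : μ (closedBall x R) ≠ ∞) (hint : IntegrableOn η (closedBall x R) μ)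
    (hx : μ {x} = 0)
    (hnontriv : ∀ r > (0 : ℝ), 0 < ∫⁻ y in closedBall x r, ENNReal.ofReal |η y - η x| ∂μ) :
    Tendsto (alphaSeq μ η x α) atTop (𝓝[>] 0) :=
  thresholdRadius.tendsto_nhdsGT (monotone_alphaRatioFn hα₀.le hα₁)
    (fun r hr => alphaRatioFn_pos hα₀.le hα₁ (hnontriv r hr) (hsupp r hr))
    (tendsto_alphaRatioFn_nhdsGT_zero hα₀ hα₁ hR hfin hint hx)

theorem tendsto_lebesgueRatio_of_tendsto_alphaSeq (hα₀ : 0 < α) (hα₁ : α ≤ 1)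
    (hsupp : ∀ r > (0 : ℝ), 0 < μ (closedBall x r)) (hR : 0 < R)
    (hfin : μ (closedBall x R) ≠ ∞) (hint : IntegrableOn η (closedBall x R) μ)
    (hx : μ {x} = 0)
    (hnontriv : ∀ r > (0 : ℝ), 0 < ∫⁻ y in closedBall x r, ENNReal.ofReal |η y - η x| ∂μ)
    (h : Tendsto (lebesgueRatio μ η x ∘ alphaSeq μ η x α) atTop (𝓝 0)) :
    Tendsto (lebesgueRatio μ η x) (𝓝[>] 0) (𝓝 0) := by
  have hs := tendsto_alphaSeq_nhdsGT hα₀ hα₁ hsupp hR hfin hint hx hnontriv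
  have hgap := thresholdRadius.eventually_le_two_mul (monotone_alphaRatioFn hα₀.le hα₁)
    (fun r hr => alphaRatioFn_pos hα₀.le hα₁ (hnontriv r hr) (hsupp r hr))
    (tendsto_alphaRatioFn_nhdsGT_zero hα₀ hα₁ hR hfin hint hx) hR
    fun a ha => tendsto_alphaRatioFn_nhdsGT hα₀.le hα₁ ha.2
      (lintegral_closedBall_ne_top hint hfin) hfin
  refine tendsto_nhdsGT_zero_of_tendsto_comp (C := 2 ^ α⁻¹)
    (fun r _ => lebesgueRatio_nonneg r) hs h ?_
  filter_upwards [hgap, hs.eventually (Ioo_mem_nhdsGT hR),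
    ((tendsto_add_atTop_iff_nat 1).2 hs).eventually self_mem_nhdsWithin]
    with m hle hmR hpos r hr
  exact lebesgueRatio_le_of_alphaRatioFn_le hα₀ (hsupp _ hpos) hr.1.le (hr.2.trans hmR.2).le
    hint hfin (hle r hr.2)

end LebesguePoint

theorem stmt_14_general
    {𝒳 : Type*} [MetricSpace 𝒳] [MeasurableSpace 𝒳] [BorelSpace 𝒳]
    (μ : Measure 𝒳) (η : 𝒳 → ℝ)
    (x : 𝒳) (hsupp : ∀ r > (0 : ℝ), 0 < μ (Metric.closedBall x r))
    (R : ℝ) (hR : 0 < R) (hfin : μ (Metric.closedBall x R) < ⊤)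
    (hint : IntegrableOn η (Metric.closedBall x R) μ)
    (hatom : μ {x} = 0)
    (hnontriv : ∀ r > (0 : ℝ),
      0 < ∫⁻ y in Metric.closedBall x r, ENNReal.ofReal |η y - η x| ∂μ) :
    (∃ α ∈ Set.Ioo (0 : ℝ) 1,
      (∃ R₁ ∈ Set.Ioo (0 : ℝ) R, alphaRatioFn μ η x α R₁ < alphaRatioFn μ η x α R) ∧
      Tendsto
        (fun m : ℕ =>
          (∫ y in Metric.closedBall x (alphaSeq μ η x α m), |η y - η x| ∂μ) /
            (μ (Metric.closedBall x (alphaSeq μ η x α m))).toReal)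
        atTop (𝓝 0)) ↔
    Tendsto
      (fun r : ℝ =>
        (∫ y in Metric.closedBall x r, |η y - η x| ∂μ) /
          (μ (Metric.closedBall x r)).toReal)
      (𝓝[>] 0) (𝓝 0) := by
  constructor
  · rintro ⟨α, hα, -, h⟩
    exact tendsto_lebesgueRatio_of_tendsto_alphaSeq hα.1 hα.2.le hsupp hR hfin.ne hint hatom
      hnontriv h
  · intro h
    have hα : (1 / 2 : ℝ) ∈ Ioo 0 1 := by norm_num
    have hMR := alphaRatioFn_pos hα.1.le hα.2.le (hnontriv R hR) (hsupp R hR)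
    obtain ⟨R₁, hlt, hR₁⟩ := (((tendsto_alphaRatioFn_nhdsGT_zero hα.1 hα.2.le hR hfin.ne hint
      hatom).eventually (gt_mem_nhds hMR)).and (Ioo_mem_nhdsGT hR)).exists
    exact ⟨1 / 2, hα, ⟨R₁, hR₁, hlt⟩,
      h.comp (tendsto_alphaSeq_nhdsGT hα.1 hα.2.le hsupp hR hfin.ne hint hatom hnontriv)⟩

/-- **Theorem (sequential characterization of Lebesgue points).**
Setting: `μ` a Borel measure on a metric space, `x` in the support of `μ`,
`μ(B̄_R(x)) < ∞` for some `R > 0`, `η` measurable and integrable on `B̄_R(x)`, with the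
non-triviality assumptions `μ {x} = 0` and `∫_{B̄_r(x)} |η − η(x)| dμ > 0` for all
`r > 0`. Then `x` is a Lebesgue point for `η` w.r.t. `μ` along the α-sequence for some
`α ∈ (0,1)` iff `x` is a Lebesgue point for `η` w.r.t. `μ`. -/
theorem stmt_14
    {𝒳 : Type*} [MetricSpace 𝒳] [MeasurableSpace 𝒳] [BorelSpace 𝒳]
    (μ : Measure 𝒳) (η : 𝒳 → ℝ) (hηmeas : Measurable η)
    (x : 𝒳) (hsupp : ∀ r > (0 : ℝ), 0 < μ (Metric.closedBall x r))
    (R : ℝ) (hR : 0 < R) (hfin : μ (Metric.closedBall x R) < ⊤)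
    (hint : IntegrableOn η (Metric.closedBall x R) μ)
    (hatom : μ {x} = 0)
    (hnontriv : ∀ r > (0 : ℝ),
      0 < ∫⁻ y in Metric.closedBall x r, ENNReal.ofReal |η y - η x| ∂μ) :
    (∃ α ∈ Set.Ioo (0 : ℝ) 1,
      (∃ R₁ ∈ Set.Ioo (0 : ℝ) R, alphaRatioFn μ η x α R₁ < alphaRatioFn μ η x α R) ∧
      Tendsto
        (fun m : ℕ =>
          (∫ y in Metric.closedBall x (alphaSeq μ η x α m), |η y - η x| ∂μ) /
            (μ (Metric.closedBall x (alphaSeq μ η x α m))).toReal)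
        atTop (𝓝 0)) ↔
    Tendsto
      (fun r : ℝ =>
        (∫ y in Metric.closedBall x r, |η y - η x| ∂μ) /
          (μ (Metric.closedBall x r)).toReal)
      (𝓝[>] 0) (𝓝 0) :=
  stmt_14_general μ η x hsupp R hR hfin hint hatom hnontriv
end
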